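/- For every b > 0, one has s_b = limsup_{n→∞} s_{n,b}, where for each n ∈ ℕ, s_{n,b} denotes the unique number in [0,1] satisfying β_n^ν(s_{n,b}) = b·s_{n,b} (which exists and is unique since β_n^ν is continuous, non-increasing, with β_n^ν(0) ≥ 0 and β_n^ν(1) = 0) (Lemma 2.4, first part). -/

import Mathlib

open MeasureTheory Filter
open scoped ENNReal

noncomputable section

/-- The half-open unit cube `(0,1]^m`. -/
def unitCube (m : ℕ) : Set (Fin m → ℝ) := {x | ∀ i, x i ∈ Set.Ioc (0 : ℝ) 1}

/-- The half-open dyadic cube of generation `n` indexed by `l ∈ ℤ^m`. -/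
def dyadicCube (m n : ℕ) (l : Fin m → ℤ) : Set (Fin m → ℝ) :=
  {x | ∀ i, x i ∈ Set.Ioc ((l i : ℝ) / 2 ^ n) (((l i : ℝ) + 1) / 2 ^ n)}

/-- `β_n^ν(s) = log (∑_{C ∈ 𝒟_n} ν(C)^s) / log (2^n)`, the sum running over all
dyadic cubes of generation `n` with positive `ν`-measure. -/
def betaN (m : ℕ) (ν : Measure (Fin m → ℝ)) (n : ℕ) (s : ℝ) : ℝ :=
  Real.log (∑' l : {l : Fin m → ℤ // 0 < ν (dyadicCube m n l)},
      (ν (dyadicCube m n l.1)).toReal ^ s) / Real.log ((2 : ℝ) ^ n)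

/-- The `L^q`-spectrum `β_ν(s) = limsup_n β_n^ν(s)`. -/
def lqSpectrum (m : ℕ) (ν : Measure (Fin m → ℝ)) (s : ℝ) : ℝ :=
  limsup (fun n => betaN m ν n s) atTop

/-- `s_b = inf {s > 0 : β_ν(s) - b·s ≤ 0}`. -/
def sb (m : ℕ) (ν : Measure (Fin m → ℝ)) (b : ℝ) : ℝ :=
  sInf {s : ℝ | 0 < s ∧ lqSpectrum m ν s - b * s ≤ 0}

/-!
Up to the factor `1 / log 2^n`, `β_n^ν(s)` is `log ∑_C ν(C)^s`, a finite sum over the dyadic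
cubes of positive mass inside `(0,1]^m`. These masses lie in `(0,1]` and add up to `1`, so
`β_n^ν` is continuous and non-increasing with `β_n^ν(1) = 0` and `β_n^ν(0) ≤ m`; hence
`s ↦ β_n^ν(s) - b s` is strictly decreasing with exactly one zero `σ_n` in `[0,1]`.
Monotonicity then transfers the position of the zeros to the `limsup`: if `σ_n ≤ c ≤ 1`
eventually, then `β_n^ν(c) ≤ β_n^ν(σ_n) = b σ_n ≤ b c` eventually, so `β_ν(c) ≤ b c`; if
`σ_n ≥ c` frequently, then `β_n^ν(s) ≥ b c` frequently for `s ≤ c`, so `β_ν(s) ≥ b c > b s`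
when `s < c`.
-/

section DyadicCubes

variable {m : ℕ}

def dyadicIndex (n : ℕ) (x : Fin m → ℝ) : Fin m → ℤ := fun i => ⌈x i * 2 ^ n⌉ - 1

lemma mem_dyadicCube_iff {n : ℕ} {l : Fin m → ℤ} {x : Fin m → ℝ} :
    x ∈ dyadicCube m n l ↔ dyadicIndex n x = l := by
  have h2n : (0 : ℝ) < 2 ^ n := by positivity
  simp only [dyadicCube, Set.mem_ofPred_eq, Set.mem_Ioc, funext_iff, dyadicIndex,
    sub_eq_iff_eq_add, Int.ceil_eq_iff, div_lt_iff₀ h2n, le_div_iff₀ h2n]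
  push_cast
  simp only [add_sub_cancel_right]

def dyadicBox (m n : ℕ) : Finset (Fin m → ℤ) :=
  Fintype.piFinset fun _ => Finset.Ico 0 (2 ^ n)

lemma card_dyadicBox (m n : ℕ) : (dyadicBox m n).card = 2 ^ (n * m) := by
  rw [dyadicBox, Fintype.card_piFinset_const, Int.card_Ico, sub_zero, pow_mul]
  exact congrArg (· ^ m) (Int.toNat_natCast (2 ^ n))

lemma dyadicIndex_mem_dyadicBox {n : ℕ} {x : Fin m → ℝ} (hx : x ∈ unitCube m) :
    dyadicIndex n x ∈ dyadicBox m n := by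
  simp only [dyadicBox, Fintype.mem_piFinset, Finset.mem_Ico, dyadicIndex]
  intro i
  have hpos : 0 < ⌈x i * 2 ^ n⌉ := Int.ceil_pos.2 (mul_pos (hx i).1 (by positivity))
  have hle : ⌈x i * 2 ^ n⌉ ≤ 2 ^ n := Int.ceil_le.2 (by
    push_cast
    exact mul_le_of_le_one_left (by positivity) (hx i).2)
  omega

lemma measurableSet_dyadicCube (m n : ℕ) (l : Fin m → ℤ) :
    MeasurableSet (dyadicCube m n l) := by
  simp only [dyadicCube, Set.ofPred_forall]
  exact MeasurableSet.iInter fun i => measurableSet_Ioc.preimage (measurable_pi_apply i)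

lemma pairwise_disjoint_dyadicCube (m n : ℕ) :
    Pairwise (Function.onFun Disjoint (dyadicCube m n)) :=
  fun _ _ hne => Set.disjoint_left.2 fun _ hx hx' =>
    hne ((mem_dyadicCube_iff.1 hx).symm.trans (mem_dyadicCube_iff.1 hx'))

lemma unitCube_subset_biUnion_dyadicCube (m n : ℕ) :
    unitCube m ⊆ ⋃ l ∈ dyadicBox m n, dyadicCube m n l := fun _ hx =>
  Set.mem_biUnion (dyadicIndex_mem_dyadicBox hx) (mem_dyadicCube_iff.2 rfl)

end DyadicCubes

section DyadicSupport

variable {m : ℕ} {ν : Measure (Fin m → ℝ)} [IsProbabilityMeasure ν]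

open scoped Classical in
def dyadicSupport (ν : Measure (Fin m → ℝ)) (n : ℕ) : Finset (Fin m → ℤ) :=
  {l ∈ dyadicBox m n | 0 < ν (dyadicCube m n l)}

lemma measure_biUnion_dyadicBox (hν : ν (unitCube m) = 1) (n : ℕ) :
    ν (⋃ l ∈ dyadicBox m n, dyadicCube m n l) = 1 :=
  le_antisymm prob_le_one (hν ▸ measure_mono (unitCube_subset_biUnion_dyadicCube m n))

lemma mem_dyadicSupport_iff (hν : ν (unitCube m) = 1) {n : ℕ} {l : Fin m → ℤ} :
    l ∈ dyadicSupport ν n ↔ 0 < ν (dyadicCube m n l) := by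
  classical
  refine ⟨fun hl => (Finset.mem_filter.1 hl).2, fun hl => Finset.mem_filter.2 ⟨?_, hl⟩⟩
  have hae : ∀ᵐ x ∂ν, x ∈ ⋃ l ∈ dyadicBox m n, dyadicCube m n l :=
    (prob_compl_eq_zero_iff (Finset.measurableSet_biUnion _ fun l _ =>
      measurableSet_dyadicCube m n l)).2 (measure_biUnion_dyadicBox hν n)
  obtain ⟨x, hx, hx'⟩ := Measure.exists_mem_of_measure_ne_zero_of_ae hl.ne' (ae_restrict_of_ae hae)
  obtain ⟨l', hl', hxl'⟩ := Set.mem_iUnion₂.1 hx'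
  rwa [(mem_dyadicCube_iff.1 hx).symm.trans (mem_dyadicCube_iff.1 hxl')]

lemma card_dyadicSupport_le (ν : Measure (Fin m → ℝ)) (n : ℕ) :
    (dyadicSupport ν n).card ≤ 2 ^ (n * m) := by
  classical
  exact card_dyadicBox m n ▸ Finset.card_filter_le _ _

lemma sum_measure_dyadicSupport (hν : ν (unitCube m) = 1) (n : ℕ) :
    ∑ l ∈ dyadicSupport ν n, ν (dyadicCube m n l) = 1 := by
  classical
  rw [dyadicSupport, Finset.sum_filter_of_ne fun _ _ h => pos_iff_ne_zero.2 h,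
    ← measure_biUnion_finset (fun l _ l' _ hne => pairwise_disjoint_dyadicCube m n hne)
      fun l _ => measurableSet_dyadicCube m n l, measure_biUnion_dyadicBox hν n]

end DyadicSupport

section PartitionSum

variable {m : ℕ} {ν : Measure (Fin m → ℝ)} [IsProbabilityMeasure ν]

def dyadicPartitionSum (ν : Measure (Fin m → ℝ)) (n : ℕ) (s : ℝ) : ℝ :=
  ∑ l ∈ dyadicSupport ν n, ν.real (dyadicCube m n l) ^ s

lemma betaN_eq_log_dyadicPartitionSum (hν : ν (unitCube m) = 1) (n : ℕ) (s : ℝ) :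
    betaN m ν n s = Real.log (dyadicPartitionSum ν n s) / Real.log (2 ^ n) := by
  rw [betaN, dyadicPartitionSum, ← Finset.tsum_subtype]
  congr 2
  exact (Equiv.subtypeEquivRight fun _ => (mem_dyadicSupport_iff hν).symm).tsum_eq
    fun l => ν.real (dyadicCube m n l.1) ^ s

lemma measureReal_dyadicCube_pos (hν : ν (unitCube m) = 1) {n : ℕ} {l : Fin m → ℤ}
    (hl : l ∈ dyadicSupport ν n) : 0 < ν.real (dyadicCube m n l) :=
  ENNReal.toReal_pos ((mem_dyadicSupport_iff hν).1 hl).ne' (measure_ne_top ν _)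

lemma dyadicPartitionSum_one (hν : ν (unitCube m) = 1) (n : ℕ) :
    dyadicPartitionSum ν n 1 = 1 := by
  simp only [dyadicPartitionSum, Real.rpow_one, Measure.real]
  rw [← ENNReal.toReal_sum fun _ _ => measure_ne_top ν _, sum_measure_dyadicSupport hν n,
    ENNReal.toReal_one]

lemma dyadicPartitionSum_zero (ν : Measure (Fin m → ℝ)) (n : ℕ) :
    dyadicPartitionSum ν n 0 = (dyadicSupport ν n).card := by
  simp [dyadicPartitionSum]

lemma dyadicPartitionSum_pos (hν : ν (unitCube m) = 1) (n : ℕ) (s : ℝ) :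
    0 < dyadicPartitionSum ν n s := by
  have hne : (dyadicSupport ν n).Nonempty :=
    Finset.nonempty_of_sum_ne_zero (by rw [sum_measure_dyadicSupport hν n]; exact one_ne_zero)
  exact Finset.sum_pos (fun l hl => Real.rpow_pos_of_pos (measureReal_dyadicCube_pos hν hl) s) hne

lemma antitone_dyadicPartitionSum (hν : ν (unitCube m) = 1) (n : ℕ) :
    Antitone (dyadicPartitionSum ν n) := fun _ _ hst =>
  Finset.sum_le_sum fun _ hl =>
    Real.rpow_le_rpow_of_exponent_ge (measureReal_dyadicCube_pos hν hl) measureReal_le_one hst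

lemma continuous_dyadicPartitionSum (hν : ν (unitCube m) = 1) (n : ℕ) :
    Continuous (dyadicPartitionSum ν n) :=
  continuous_finsetSum _ fun _ hl =>
    Real.continuous_const_rpow (measureReal_dyadicCube_pos hν hl).ne'

end PartitionSum

section BetaN

variable {m : ℕ} {ν : Measure (Fin m → ℝ)} [IsProbabilityMeasure ν]

lemma antitone_betaN (hν : ν (unitCube m) = 1) (n : ℕ) : Antitone (betaN m ν n) := by
  intro s t hst
  simp only [betaN_eq_log_dyadicPartitionSum hν]
  exact div_le_div_of_nonneg_right
    (Real.log_le_log (dyadicPartitionSum_pos hν n t) (antitone_dyadicPartitionSum hν n hst))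
    (Real.log_nonneg (one_le_pow₀ one_le_two))

lemma continuous_betaN (hν : ν (unitCube m) = 1) (n : ℕ) : Continuous (betaN m ν n) := by
  simp only [funext (betaN_eq_log_dyadicPartitionSum hν n)]
  exact ((continuous_dyadicPartitionSum hν n).log
    fun s => (dyadicPartitionSum_pos hν n s).ne').div_const _

lemma betaN_one (hν : ν (unitCube m) = 1) (n : ℕ) : betaN m ν n 1 = 0 := by
  rw [betaN_eq_log_dyadicPartitionSum hν, dyadicPartitionSum_one hν, Real.log_one, zero_div]

lemma betaN_zero_le (hν : ν (unitCube m) = 1) (n : ℕ) : betaN m ν n 0 ≤ m := by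
  rw [betaN_eq_log_dyadicPartitionSum hν]
  refine div_le_of_le_mul₀ (Real.log_nonneg (one_le_pow₀ one_le_two)) m.cast_nonneg ?_
  calc Real.log (dyadicPartitionSum ν n 0)
      ≤ Real.log ((2 : ℝ) ^ (n * m)) := by
        refine Real.log_le_log (dyadicPartitionSum_pos hν n 0) ?_
        rw [dyadicPartitionSum_zero]
        exact_mod_cast card_dyadicSupport_le ν n
    _ = m * Real.log (2 ^ n) := by rw [pow_mul, Real.log_pow]

end BetaN

section Roots

variable {m : ℕ} {ν : Measure (Fin m → ℝ)} [IsProbabilityMeasure ν] {b : ℝ}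

lemma existsUnique_betaN_eq_mul (hν : ν (unitCube m) = 1) (hb : 0 < b) (n : ℕ) :
    ∃! s : ℝ, s ∈ Set.Icc (0 : ℝ) 1 ∧ betaN m ν n s = b * s := by
  set g : ℝ → ℝ := fun s => betaN m ν n s - b * s
  have hg : StrictAnti g :=
    (antitone_betaN hν n).add_strictAnti fun _ _ hst => neg_lt_neg (mul_lt_mul_of_pos_left hst hb)
  have hg0 : 0 ≤ g 0 := by simpa [g, betaN_one hν] using antitone_betaN hν n zero_le_one
  have hg1 : g 1 ≤ 0 := by simpa [g, betaN_one hν] using hb.le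
  obtain ⟨s, hs, hgs⟩ := intermediate_value_Icc' zero_le_one
    ((continuous_betaN hν n).sub (continuous_const_mul b)).continuousOn ⟨hg1, hg0⟩
  refine ⟨s, ⟨hs, sub_eq_zero.1 hgs⟩, fun t ⟨_, ht⟩ => hg.injective ?_⟩
  change betaN m ν n t - b * t = betaN m ν n s - b * s
  rw [ht, sub_self]
  exact hgs.symm

variable {σ : ℕ → ℝ}

lemma lqSpectrum_le_mul_of_eventually_le (hν : ν (unitCube m) = 1) (hb : 0 ≤ b)
    (hσ : ∀ n, betaN m ν n (σ n) = b * σ n) {c : ℝ} (hc : c ≤ 1)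
    (hσc : ∀ᶠ n in atTop, σ n ≤ c) : lqSpectrum m ν c ≤ b * c := by
  refine limsup_le_of_le (isCoboundedUnder_le_of_le atTop (x := 0) fun n => ?_) ?_
  · simpa [betaN_one hν] using antitone_betaN hν n hc
  · filter_upwards [hσc] with n hn
    calc betaN m ν n c ≤ betaN m ν n (σ n) := antitone_betaN hν n hn
      _ = b * σ n := hσ n
      _ ≤ b * c := mul_le_mul_of_nonneg_left hn hb

lemma mul_le_lqSpectrum_of_frequently_le (hν : ν (unitCube m) = 1) (hb : 0 ≤ b)
    (hσ : ∀ n, betaN m ν n (σ n) = b * σ n) {s c : ℝ} (hs : 0 ≤ s) (hsc : s ≤ c)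
    (hσc : ∃ᶠ n in atTop, c ≤ σ n) : b * c ≤ lqSpectrum m ν s := by
  refine le_limsup_of_frequently_le (hσc.mono fun n hn => ?_)
    (isBoundedUnder_of ⟨m, fun n => (antitone_betaN hν n hs).trans (betaN_zero_le hν n)⟩)
  calc b * c ≤ b * σ n := mul_le_mul_of_nonneg_left hn hb
    _ = betaN m ν n (σ n) := (hσ n).symm
    _ ≤ betaN m ν n s := antitone_betaN hν n (hsc.trans hn)

lemma sb_le_limsup (hν : ν (unitCube m) = 1) (hb : 0 ≤ b) (hσ01 : ∀ n, σ n ∈ Set.Icc (0 : ℝ) 1)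
    (hσ : ∀ n, betaN m ν n (σ n) = b * σ n) : sb m ν b ≤ limsup σ atTop := by
  have hbdd : IsBoundedUnder (· ≤ ·) atTop σ := isBoundedUnder_of ⟨1, fun n => (hσ01 n).2⟩
  have hL : 0 ≤ limsup σ atTop :=
    le_limsup_of_frequently_le (.of_forall fun n => (hσ01 n).1) hbdd
  refine le_of_forall_gt_imp_ge_of_dense fun c hc => ?_
  -- capping at `1` keeps `β_n^ν ≥ β_n^ν(1) = 0`, a lower bound that `limsup` in `ℝ` needs
  have hσc : ∀ᶠ n in atTop, σ n ≤ min c 1 :=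
    (eventually_lt_of_limsup_lt hc hbdd).mono fun n hn => le_min hn.le (hσ01 n).2
  calc sb m ν b ≤ min c 1 := csInf_le ⟨0, fun _ hx => hx.1.le⟩
        ⟨lt_min (hL.trans_lt hc) one_pos, sub_nonpos.2
          (lqSpectrum_le_mul_of_eventually_le hν hb hσ (min_le_right c 1) hσc)⟩
    _ ≤ c := min_le_left c 1

lemma limsup_le_sb (hν : ν (unitCube m) = 1) (hb : 0 < b) (hσ01 : ∀ n, σ n ∈ Set.Icc (0 : ℝ) 1)
    (hσ : ∀ n, betaN m ν n (σ n) = b * σ n) : limsup σ atTop ≤ sb m ν b := by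
  have hone : lqSpectrum m ν 1 - b * 1 ≤ 0 := sub_nonpos.2
    (lqSpectrum_le_mul_of_eventually_le hν hb.le hσ le_rfl (.of_forall fun n => (hσ01 n).2))
  refine le_csInf ⟨1, one_pos, hone⟩ fun s ⟨hs, hsb⟩ => le_of_not_gt fun hsL => ?_
  obtain ⟨c, hsc, hcL⟩ := exists_between hsL
  have hσc : ∃ᶠ n in atTop, c ≤ σ n :=
    (frequently_lt_of_lt_limsup (isCoboundedUnder_le_of_le atTop fun n => (hσ01 n).1) hcL).mono
      fun _ => le_of_lt
  have hbc := mul_le_lqSpectrum_of_frequently_le hν hb.le hσ hs.le hsc.le hσc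
  linarith [mul_lt_mul_of_pos_left hsc hb]

end Roots

theorem statement4 (m : ℕ) (ν : Measure (Fin m → ℝ))
    [IsProbabilityMeasure ν] (hν : ν (unitCube m) = 1) (b : ℝ) (hb : 0 < b) :
    (∀ n : ℕ, ∃! s : ℝ, s ∈ Set.Icc (0 : ℝ) 1 ∧ betaN m ν n s = b * s) ∧
    ∀ σ : ℕ → ℝ, (∀ n : ℕ, σ n ∈ Set.Icc (0 : ℝ) 1 ∧ betaN m ν n (σ n) = b * σ n) →
      sb m ν b = limsup σ atTop :=
  ⟨existsUnique_betaN_eq_mul hν hb, fun _ hσ =>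
    le_antisymm (sb_le_limsup hν hb.le (fun n => (hσ n).1) fun n => (hσ n).2)
      (limsup_le_sb hν hb (fun n => (hσ n).1) fun n => (hσ n).2)⟩
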